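/- arXiv:math/0604044 — 4 statements merged into one kernel-verified Lean document; each statement's English description precedes it below -/
import Mathlib

section
/- Let p ∈ (1,∞), β > 0, α = -β, ε > 0. For k ∈ ℕ define u_k(s) = 1_{[k,k+1]}(s) e^{-ε(s-k)}. Then ‖u_k‖_{L^p_α(0,∞)} ≤ k^{-β} ‖e^{-ε(·)}‖_{L^p(0,1)}, while for every δ ∈ (0,1], ∫_k^{k+δ} e^{-ε(k+δ-s)} e^{-ε(s-k)} ds = δ e^{-εδ}. In particular, the convolution (e^{-ε·} * u_k)(k+δ) does not tend to 0 uniformly relative to ‖u_k‖_{L^p_α}, so there is no constant K with sup_t |(e^{-ε·} * u)(t)| ≤ K ‖u‖_{L^p_α(0,∞)} for all u. -/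
/-! The bumps `u_k = 1_{[k,k+1]} e^{-ε(· - k)}` all satisfy `(e^{-ε·} * u_k)(k + 1) = e^{-ε}`,
since the convolution integrand is constant on `[k, k+1]`. On the other hand the weight
`s ^ (-β) ≤ k ^ (-β)` on their support forces `‖u_k‖_{L^p_{-β}} ≤ k ^ (-β) ‖e^{-ε·}‖_{L^p(0,1)} → 0`,
so no constant `K` can bound the convolution by the weighted norm. -/

open MeasureTheory Set Real Filter Topology

noncomputable def expBump (ε a : ℝ) : ℝ → ℝ :=
  (Icc a (a + 1)).indicator fun s => exp (-ε * (s - a))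

lemma expBump_nonneg (ε a s : ℝ) : 0 ≤ expBump ε a s :=
  indicator_nonneg (fun _ _ => (exp_pos _).le) s

lemma measurable_expBump (ε a : ℝ) : Measurable (expBump ε a) :=
  (by fun_prop : Measurable fun s => exp (-ε * (s - a))).indicator measurableSet_Icc

lemma rpow_mul_indicator_rpow {p : ℝ} (hp : p ≠ 0) (α : ℝ) (S : Set ℝ) (g : ℝ → ℝ) :
    (fun s => (s ^ α * S.indicator g s) ^ p) = S.indicator fun s => (s ^ α * g s) ^ p := by
  funext s
  by_cases hs : s ∈ S <;> simp [hs, zero_rpow hp]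

lemma setIntegral_Ioi_indicator_Icc {a : ℝ} (ha : 0 < a) (b : ℝ) (f : ℝ → ℝ) :
    ∫ s in Ioi 0, (Icc a b).indicator f s = ∫ s in Icc a b, f s := by
  have hsub : Icc a b ⊆ Ioi 0 := fun s hs => ha.trans_le hs.1
  rw [setIntegral_indicator measurableSet_Icc, inter_eq_self_of_subset_right hsub]

lemma setIntegral_Icc_comp_sub (f : ℝ → ℝ) (a : ℝ) :
    ∫ s in Icc a (a + 1), f (s - a) = ∫ s in Ioo 0 1, f s := by
  rw [integral_Icc_eq_integral_Ioc, ← intervalIntegral.integral_of_le (by linarith),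
    intervalIntegral.integral_comp_sub_right, sub_self, add_sub_cancel_left,
    intervalIntegral.integral_of_le zero_le_one, integral_Ioc_eq_integral_Ioo]

lemma integrableOn_weighted_expBump {p : ℝ} (hp : 0 < p) (α ε : ℝ) {a : ℝ} (ha : 0 < a) :
    IntegrableOn (fun s => (s ^ α * expBump ε a s) ^ p) (Ioi 0) := by
  rw [expBump, rpow_mul_indicator_rpow hp.ne']
  refine (ContinuousOn.integrableOn_Icc ?_).integrable_indicator measurableSet_Icc |>.integrableOn
  exact ((continuousOn_id.rpow_const fun s hs => Or.inl (ha.trans_le hs.1).ne').mul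
    (by fun_prop)).rpow_const fun _ _ => Or.inr hp.le

lemma setIntegral_weighted_expBump_le {p α : ℝ} (hp : 0 < p) (hα : α ≤ 0) (ε : ℝ) {a : ℝ}
    (ha : 0 < a) :
    ∫ s in Ioi 0, (s ^ α * expBump ε a s) ^ p ≤
      (a ^ α) ^ p * ∫ s in Ioo 0 1, exp (-ε * s) ^ p := by
  rw [expBump, rpow_mul_indicator_rpow hp.ne', setIntegral_Ioi_indicator_Icc ha,
    ← setIntegral_Icc_comp_sub (fun s => exp (-ε * s) ^ p) a, ← integral_const_mul]
  refine integral_mono_of_nonneg ?_ ?_ ?_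
  · exact ae_restrict_of_forall_mem measurableSet_Icc fun s hs =>
      rpow_nonneg (mul_nonneg (rpow_nonneg (ha.le.trans hs.1) _) (exp_pos _).le) _
  · exact (continuous_const.mul ((by fun_prop : Continuous fun s => exp (-ε * (s - a))).rpow_const
      fun _ => Or.inr hp.le)).integrableOn_Icc
  · refine ae_restrict_of_forall_mem measurableSet_Icc fun s hs => ?_
    have hweight : s ^ α ≤ a ^ α := rpow_le_rpow_of_nonpos ha hs.1 hα
    dsimp only
    rw [← mul_rpow (rpow_nonneg ha.le _) (exp_pos _).le]
    gcongr
    exact mul_nonneg (rpow_nonneg (ha.le.trans hs.1) _) (exp_pos _).le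

lemma setIntegral_weighted_expBump_nonneg (p α ε a : ℝ) :
    0 ≤ ∫ s in Ioi 0, (s ^ α * expBump ε a s) ^ p :=
  setIntegral_nonneg measurableSet_Ioi fun s hs =>
    rpow_nonneg (mul_nonneg (rpow_nonneg (le_of_lt hs) _) (expBump_nonneg ε a s)) _

lemma weightedNorm_expBump_le {p α : ℝ} (hp : 0 < p) (hα : α ≤ 0) (ε : ℝ) {a : ℝ} (ha : 0 < a) :
    (∫ s in Ioi 0, (s ^ α * expBump ε a s) ^ p) ^ (1 / p) ≤
      a ^ α * (∫ s in Ioo 0 1, exp (-ε * s) ^ p) ^ (1 / p) := by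
  have hexp_nonneg : 0 ≤ ∫ s in Ioo 0 1, exp (-ε * s) ^ p :=
    setIntegral_nonneg measurableSet_Ioo fun s _ => rpow_nonneg (exp_pos _).le _
  calc (∫ s in Ioi 0, (s ^ α * expBump ε a s) ^ p) ^ (1 / p)
      ≤ ((a ^ α) ^ p * ∫ s in Ioo 0 1, exp (-ε * s) ^ p) ^ (1 / p) :=
        rpow_le_rpow (setIntegral_weighted_expBump_nonneg p α ε a)
          (setIntegral_weighted_expBump_le hp hα ε ha) (by positivity)
    _ = a ^ α * (∫ s in Ioo 0 1, exp (-ε * s) ^ p) ^ (1 / p) := by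
        rw [mul_rpow (rpow_nonneg (rpow_nonneg ha.le _) _) hexp_nonneg,
          one_div, rpow_rpow_inv (rpow_nonneg ha.le _) hp.ne']

lemma setIntegral_exp_mul_exp (ε a : ℝ) {δ : ℝ} (hδ : 0 ≤ δ) :
    ∫ s in Ioc a (a + δ), exp (-ε * ((a + δ) - s)) * exp (-ε * (s - a)) = δ * exp (-ε * δ) := by
  have hconst : ∀ s, exp (-ε * ((a + δ) - s)) * exp (-ε * (s - a)) = exp (-ε * δ) := by
    intro s
    rw [← exp_add]
    ring_nf
  simp_rw [hconst]
  rw [setIntegral_const, measureReal_def, volume_Ioc, add_sub_cancel_left,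
    ENNReal.toReal_ofReal hδ, smul_eq_mul]

lemma setIntegral_exp_mul_expBump {a : ℝ} (ha : 0 < a) (ε : ℝ) :
    ∫ s in Ioo 0 (a + 1), exp (-ε * ((a + 1) - s)) * expBump ε a s = exp (-ε) := by
  have hsupport : Ioo 0 (a + 1) ∩ Icc a (a + 1) = Ico a (a + 1) := by
    ext s
    constructor
    · rintro ⟨⟨-, hs_lt⟩, hs_ge, -⟩
      exact ⟨hs_ge, hs_lt⟩
    · rintro ⟨hs_ge, hs_lt⟩
      exact ⟨⟨ha.trans_le hs_ge, hs_lt⟩, hs_ge, hs_lt.le⟩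
  have hfun : (fun s => exp (-ε * ((a + 1) - s)) * expBump ε a s) =
      (Icc a (a + 1)).indicator fun s => exp (-ε * ((a + 1) - s)) * exp (-ε * (s - a)) :=
    funext fun s => by rw [expBump, indicator_mul_right]
  rw [hfun, setIntegral_indicator measurableSet_Icc, hsupport, integral_Ico_eq_integral_Ioo,
    ← integral_Ioc_eq_integral_Ioo, setIntegral_exp_mul_exp ε a zero_le_one, one_mul, mul_one]

theorem stmt1_general (p α β ε : ℝ) (hp : 1 < p)
    (hβ : 0 < β) (hα : α = -β) :
    (∀ k : ℕ, 1 ≤ k →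
      (∫ s in Ioi (0:ℝ),
          (s ^ α * ((Icc (k:ℝ) (k+1)).indicator (fun s => Real.exp (-ε * (s - k))) s)) ^ p) ^ (1/p)
        ≤ (k:ℝ) ^ (-β) * (∫ s in Ioo (0:ℝ) 1, Real.exp (-ε * s) ^ p) ^ (1/p)) ∧
    (∀ k : ℕ, ∀ δ : ℝ, 0 < δ → δ ≤ 1 →
      ∫ s in Ioc (k:ℝ) (k+δ), Real.exp (-ε * ((k+δ) - s)) * Real.exp (-ε * (s - k))
        = δ * Real.exp (-ε * δ)) ∧
    ¬ ∃ K : ℝ, ∀ u : ℝ → ℝ, Measurable u →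
        IntegrableOn (fun s => (s ^ α * |u s|) ^ p) (Ioi 0) →
        ∀ t : ℝ, 0 < t →
          |∫ s in Ioo 0 t, Real.exp (-ε * (t - s)) * u s| ≤
            K * (∫ s in Ioi (0:ℝ), (s ^ α * |u s|) ^ p) ^ (1/p) := by
  subst hα
  have hp0 : 0 < p := one_pos.trans hp
  have hnorm : ∀ k : ℕ, 1 ≤ k →
      (∫ s in Ioi 0, (s ^ (-β) * expBump ε k s) ^ p) ^ (1 / p) ≤
        (k : ℝ) ^ (-β) * (∫ s in Ioo 0 1, exp (-ε * s) ^ p) ^ (1 / p) := fun k hk =>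
    weightedNorm_expBump_le hp0 (neg_nonpos.2 hβ.le) ε (by exact_mod_cast hk)
  refine ⟨hnorm, fun k δ hδ _ => setIntegral_exp_mul_exp ε k hδ.le, ?_⟩
  rintro ⟨K, hK⟩
  set C := (∫ s in Ioo 0 1, exp (-ε * s) ^ p) ^ (1 / p)
  have hlower : ∀ k : ℕ, 1 ≤ k → exp (-ε) ≤ max K 0 * ((k : ℝ) ^ (-β) * C) := by
    intro k hk
    have hk0 : (0 : ℝ) < k := by exact_mod_cast hk
    have habs : ∀ s, |expBump ε k s| = expBump ε k s := fun s =>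
      abs_of_nonneg (expBump_nonneg ε k s)
    have hint : IntegrableOn (fun s => (s ^ (-β) * |expBump ε k s|) ^ p) (Ioi 0) := by
      simpa only [habs] using integrableOn_weighted_expBump hp0 (-β) ε hk0
    have hbound := hK (expBump ε k) (measurable_expBump ε k) hint (k + 1) (by positivity)
    simp only [habs, setIntegral_exp_mul_expBump hk0, abs_of_pos (exp_pos _)] at hbound
    exact hbound.trans (mul_le_mul (le_max_left K 0) (hnorm k hk)
      (rpow_nonneg (setIntegral_weighted_expBump_nonneg p (-β) ε k) _) (le_max_right K 0))
  have hdecay : Tendsto (fun k : ℕ => max K 0 * ((k : ℝ) ^ (-β) * C)) atTop (𝓝 0) := by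
    simpa using ((tendsto_rpow_neg_atTop hβ).comp tendsto_natCast_atTop_atTop).mul_const C
      |>.const_mul (max K 0)
  obtain ⟨k, hsmall, hk⟩ :=
    ((hdecay.eventually (gt_mem_nhds (exp_pos (-ε)))).and (eventually_ge_atTop 1)).exists
  exact (hsmall.trans_le (hlower k hk)).false

/-- With `T(t) = e^{-εt}` on ℂ, `α = -β < 0`, and
`u_k = 1_{[k,k+1]} e^{-ε(·-k)}`: (1) `‖u_k‖_{L^p_α(0,∞)} ≤ k^{-β} ‖e^{-ε·}‖_{L^p(0,1)}`;
(2) for `δ ∈ (0,1]`, `∫_k^{k+δ} e^{-ε(k+δ-s)} e^{-ε(s-k)} ds = δ e^{-εδ}`;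
(3) hence there is no constant `K` with
`sup_{t>0} |(e^{-ε·} * u)(t)| ≤ K ‖u‖_{L^p_α(0,∞)}` for all `u`. -/
theorem stmt1 (p p' α β ε : ℝ) (hp : 1 < p) (hpp' : 1 / p + 1 / p' = 1)
    (hβ : 0 < β) (hα : α = -β) (hε : 0 < ε) :
    (∀ k : ℕ, 1 ≤ k →
      (∫ s in Ioi (0:ℝ),
          (s ^ α * ((Icc (k:ℝ) (k+1)).indicator (fun s => Real.exp (-ε * (s - k))) s)) ^ p) ^ (1/p)
        ≤ (k:ℝ) ^ (-β) * (∫ s in Ioo (0:ℝ) 1, Real.exp (-ε * s) ^ p) ^ (1/p)) ∧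
    (∀ k : ℕ, ∀ δ : ℝ, 0 < δ → δ ≤ 1 →
      ∫ s in Ioc (k:ℝ) (k+δ), Real.exp (-ε * ((k+δ) - s)) * Real.exp (-ε * (s - k))
        = δ * Real.exp (-ε * δ)) ∧
    ¬ ∃ K : ℝ, ∀ u : ℝ → ℝ, Measurable u →
        IntegrableOn (fun s => (s ^ α * |u s|) ^ p) (Ioi 0) →
        ∀ t : ℝ, 0 < t →
          |∫ s in Ioo 0 t, Real.exp (-ε * (t - s)) * u s| ≤
            K * (∫ s in Ioi (0:ℝ), (s ^ α * |u s|) ^ p) ^ (1/p) :=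
  stmt1_general p α β ε hp hβ hα
end

section
/- Let p ∈ (1,∞) and α < 1 - 1/p. Set φ(s) = |(1+s)^α - 1| for s > 0, and define the kernel k(t,s) = 1_{(0,t)}(s) · (1/(t-s)) · φ((t-s)/s) on (0,∞)². Then for every t > 0, ‖k(t,·)‖_{L^{p'}(0,∞)}^{p'} = t^{1-p'} ∫_0^1 |(σ^{-α} - 1)/(σ - 1)|^{p'} dσ, and the integral c̃ := ∫_0^1 |(σ^{-α}-1)/(σ-1)|^{p'} dσ is finite. -/
open MeasureTheory Set Real

/-!
Substituting `s = σ t` turns the kernel into `t⁻¹ |(σ^{-α} - 1)/(σ - 1)|`, which gives the scaling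
identity. For finiteness, Bernoulli's inequality gives
`|σ^{-α} - 1| ≤ max(|α|, 1) σ^{-max(α,0)} (1 - σ)` on `(0,1)`, so the integrand is dominated by a
multiple of `σ^{-max(α,0) p'}`, which is integrable because `α p' < 1`.
-/

lemma one_sub_rpow_le_max_mul_one_sub {σ β : ℝ} (hσ0 : 0 ≤ σ) (hσ1 : σ ≤ 1) (hβ : 0 ≤ β) :
    1 - σ ^ β ≤ max β 1 * (1 - σ) := by
  rcases le_total β 1 with hβ1 | hβ1
  · have hle : σ ≤ σ ^ β := by
      simpa using rpow_le_rpow_of_exponent_ge' hσ0 hσ1 hβ hβ1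
    rw [max_eq_right hβ1]
    linarith
  · have hbernoulli := one_add_mul_self_le_rpow_one_add (s := σ - 1) (by linarith) hβ1
    rw [add_sub_cancel] at hbernoulli
    rw [max_eq_left hβ1]
    linarith

lemma abs_rpow_neg_sub_one_le {σ α : ℝ} (hσ0 : 0 < σ) (hσ1 : σ ≤ 1) :
    |σ ^ (-α) - 1| ≤ max |α| 1 * σ ^ (-max α 0) * (1 - σ) := by
  rcases le_total α 0 with hα | hα
  · have hle := one_sub_rpow_le_max_mul_one_sub hσ0.le hσ1 (neg_nonneg.2 hα)
    have hpow : σ ^ (-α) ≤ 1 := rpow_le_one hσ0.le hσ1 (neg_nonneg.2 hα)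
    rw [max_eq_right hα, neg_zero, rpow_zero, mul_one, abs_of_nonpos (by linarith),
      abs_of_nonpos hα]
    linarith
  · have hle := one_sub_rpow_le_max_mul_one_sub hσ0.le hσ1 hα
    have hsplit : σ ^ (-α) - 1 = σ ^ (-α) * (1 - σ ^ α) := by
      rw [mul_sub, mul_one, ← rpow_add hσ0, neg_add_cancel, rpow_zero]
    have hpos : 0 ≤ 1 - σ ^ α := by linarith [rpow_le_one hσ0.le hσ1 hα]
    rw [max_eq_left hα, abs_of_nonneg hα, hsplit,
      abs_of_nonneg (mul_nonneg (rpow_nonneg hσ0.le _) hpos)]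
    calc σ ^ (-α) * (1 - σ ^ α) ≤ σ ^ (-α) * (max α 1 * (1 - σ)) := by gcongr
      _ = _ := by ring

lemma integrableOn_abs_rpow_neg_sub_one_div_sub_one_rpow {α q : ℝ} (hq : 0 ≤ q)
    (hαq : α * q < 1) :
    IntegrableOn (fun σ => |(σ ^ (-α) - 1) / (σ - 1)| ^ q) (Ioo (0:ℝ) 1) := by
  set a := max α 0
  have hdom : IntegrableOn (fun σ : ℝ => (max |α| 1) ^ q * σ ^ (-(a * q))) (Ioo (0:ℝ) 1) := by
    have haq : a * q < 1 := by
      rcases le_total α 0 with hα | hα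
      · simp [a, max_eq_right hα]
      · simpa [a, max_eq_left hα] using hαq
    have hpow : IntegrableOn (fun σ : ℝ => σ ^ (-(a * q))) (Ioo (0:ℝ) 1) :=
      (intervalIntegral.integrableOn_Ioo_rpow_iff one_pos).2 (by linarith)
    exact hpow.const_mul _
  refine hdom.mono' (by fun_prop : Measurable _).aestronglyMeasurable ?_
  filter_upwards [ae_restrict_mem measurableSet_Ioo] with σ ⟨hσ0, hσ1⟩
  have hbase : |(σ ^ (-α) - 1) / (σ - 1)| ≤ max |α| 1 * σ ^ (-a) := by
    rw [abs_div, abs_of_neg (sub_neg.2 hσ1), div_le_iff₀ (by linarith), neg_sub]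
    exact abs_rpow_neg_sub_one_le hσ0 hσ1.le
  rw [norm_of_nonneg (by positivity), ← neg_mul, rpow_mul hσ0.le,
    ← mul_rpow (by positivity) (by positivity)]
  exact rpow_le_rpow (abs_nonneg _) hbase hq

lemma setIntegral_Ioo_zero_eq_smul_comp_mul {E : Type*} [NormedAddCommGroup E] [NormedSpace ℝ E]
    (f : ℝ → E) {t : ℝ} (ht : 0 < t) :
    ∫ s in Ioo 0 t, f s = t • ∫ σ in Ioo 0 1, f (σ * t) := by
  rw [← integral_Ioc_eq_integral_Ioo, ← integral_Ioc_eq_integral_Ioo,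
    ← intervalIntegral.integral_of_le ht.le, ← intervalIntegral.integral_of_le zero_le_one,
    intervalIntegral.integral_comp_mul_right f ht.ne', smul_smul, mul_inv_cancel₀ ht.ne',
    one_smul, zero_mul, one_mul]

lemma inv_sub_mul_abs_one_add_div_rpow_sub_one {t σ α : ℝ} (ht : 0 < t) (hσ0 : 0 < σ)
    (hσ1 : σ < 1) :
    (t - σ * t)⁻¹ * |(1 + (t - σ * t) / (σ * t)) ^ α - 1| =
      t⁻¹ * |(σ ^ (-α) - 1) / (σ - 1)| := by
  have hbase : 1 + (t - σ * t) / (σ * t) = σ⁻¹ := by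
    field_simp
    ring
  rw [hbase, inv_rpow hσ0.le, ← rpow_neg hσ0.le, abs_div, abs_of_neg (sub_neg.2 hσ1),
    show t - σ * t = t * -(σ - 1) by ring, mul_inv]
  ring

/-- Let `p ∈ (1,∞)`, `α < 1 - 1/p`, `φ(s) = |(1+s)^α - 1|`, and
`k(t,s) = 1_{(0,t)}(s) (t-s)⁻¹ φ((t-s)/s)`. Then for all `t > 0`,
`‖k(t,·)‖_{L^{p'}}^{p'} = t^{1-p'} ∫_0^1 |(σ^{-α}-1)/(σ-1)|^{p'} dσ`,
and `c̃ = ∫_0^1 |(σ^{-α}-1)/(σ-1)|^{p'} dσ` is finite. -/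
theorem stmt5 (p p' α : ℝ) (hp : 1 < p) (hpp' : 1 / p + 1 / p' = 1)
    (hα : α < 1 - 1 / p) :
    IntegrableOn (fun σ => |(σ ^ (-α) - 1) / (σ - 1)| ^ p') (Ioo (0:ℝ) 1) ∧
    ∀ t : ℝ, 0 < t →
      ∫ s in Ioo 0 t, ((t - s)⁻¹ * |(1 + (t - s) / s) ^ α - 1|) ^ p' =
        t ^ (1 - p') * ∫ σ in Ioo (0:ℝ) 1, |(σ ^ (-α) - 1) / (σ - 1)| ^ p' := by
  have hp'_inv : 1 / p' = 1 - 1 / p := by linarith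
  have hp'_pos : 0 < p' := one_div_pos.1 <| by
    rw [hp'_inv, sub_pos, div_lt_one (by linarith)]
    exact hp
  refine ⟨integrableOn_abs_rpow_neg_sub_one_div_sub_one_rpow hp'_pos.le ?_, fun t ht => ?_⟩
  · rwa [← lt_div_iff₀ hp'_pos, hp'_inv]
  have hkernel : EqOn (fun σ => ((t - σ * t)⁻¹ * |(1 + (t - σ * t) / (σ * t)) ^ α - 1|) ^ p')
      (fun σ => t ^ (-p') * |(σ ^ (-α) - 1) / (σ - 1)| ^ p') (Ioo 0 1) := fun σ ⟨hσ0, hσ1⟩ => by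
    simp only
    rw [inv_sub_mul_abs_one_add_div_rpow_sub_one ht hσ0 hσ1,
      mul_rpow (inv_nonneg.2 ht.le) (abs_nonneg _), inv_rpow ht.le, ← rpow_neg ht.le]
  rw [setIntegral_Ioo_zero_eq_smul_comp_mul _ ht, smul_eq_mul,
    setIntegral_congr_fun measurableSet_Ioo hkernel, integral_const_mul, ← mul_assoc,
    sub_eq_add_neg, rpow_add ht, rpow_one]
end

section
/- Let p ∈ (1,∞) and α < 1 - 1/p. Suppose K : (0,∞) → ℂ is continuous with |K(t)| ≤ M/t for all t > 0. Then the operator (Tf)(t) = ∫_0^t K(t-s) [(t/s)^α - 1] f(s) ds is bounded on L^p(0,∞) with norm at most c(p,α)·M. (Scalar version of the Prüss–Simonett perturbation estimate.) -/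
/-!
The operator is dominated pointwise by `M` times the positive integral operator with kernel
`|(t/s)^α - 1| / (t - s)` on `0 < s < t`. This kernel is homogeneous of degree `-1`, so Schur's
test with the power weight `s ^ (-1/(p p'))` bounds it on `L^p(0, ∞)` by the two Mellin-type
integrals `∫₀¹ |u^{-α} - 1| u^{-1/p} / (1 - u) du` and `∫₁^∞ |r^α - 1| r^{-1/p'} / (r - 1) dr`.
The integrands are bounded near `1` and behave like `u^{-max α 0 - 1/p}` at `0`,
resp. `r^{max α 0 - 1 - 1/p'}` at `∞`, which is where `α < 1 - 1/p` is used.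
-/

open MeasureTheory Set Real
open scoped ENNReal NNReal

section Schur

variable {X Y : Type*} [MeasurableSpace X] [MeasurableSpace Y] {μ : Measure X} {ν : Measure Y}
  {p q : ℝ}

theorem rpow_lintegral_mul_le_of_weight (hpq : p.HolderConjugate q) {k F w : Y → ℝ≥0∞}
    (hk : Measurable k) (hF : Measurable F) (hw : Measurable w)
    (hw₀ : ∀ᵐ y ∂ν, w y ≠ 0) (hw_top : ∀ᵐ y ∂ν, w y ≠ ∞) :
    (∫⁻ y, k y * F y ∂ν) ^ p ≤
      (∫⁻ y, k y * w y ^ q ∂ν) ^ (p / q) * ∫⁻ y, k y * (w y)⁻¹ ^ p * F y ^ p ∂ν := by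
  have hp := hpq.pos
  have hq := hpq.symm.pos
  have hsplit : (fun y => k y * F y) =ᵐ[ν]
      (fun y => k y ^ (1 / p) * (w y)⁻¹ * F y) * fun y => k y ^ (1 / q) * w y := by
    filter_upwards [hw₀, hw_top] with y h₀ h_top
    have hk_split : k y ^ (1 / p) * k y ^ (1 / q) = k y := by
      rw [← ENNReal.rpow_add_of_nonneg _ _ (by positivity) (by positivity),
        hpq.one_div_add_one_div, div_one, ENNReal.rpow_one]
    calc k y * F y = k y ^ (1 / p) * k y ^ (1 / q) * ((w y)⁻¹ * w y) * F y := by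
          rw [hk_split, ENNReal.inv_mul_cancel h₀ h_top, mul_one]
      _ = _ := by simp only [Pi.mul_apply]; ring
  have hHolder := ENNReal.lintegral_mul_le_Lp_mul_Lq ν hpq
    (f := fun y => k y ^ (1 / p) * (w y)⁻¹ * F y) (g := fun y => k y ^ (1 / q) * w y)
    (by fun_prop) (by fun_prop)
  rw [← lintegral_congr_ae hsplit] at hHolder
  have hpow_p : ∀ y, (k y ^ (1 / p) * (w y)⁻¹ * F y) ^ p = k y * (w y)⁻¹ ^ p * F y ^ p := by
    intro y
    rw [ENNReal.mul_rpow_of_nonneg _ _ hp.le, ENNReal.mul_rpow_of_nonneg _ _ hp.le,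
      ← ENNReal.rpow_mul, one_div_mul_cancel hp.ne', ENNReal.rpow_one]
  have hpow_q : ∀ y, (k y ^ (1 / q) * w y) ^ q = k y * w y ^ q := by
    intro y
    rw [ENNReal.mul_rpow_of_nonneg _ _ hq.le, ← ENNReal.rpow_mul, one_div_mul_cancel hq.ne',
      ENNReal.rpow_one]
  simp only [hpow_p, hpow_q] at hHolder
  calc (∫⁻ y, k y * F y ∂ν) ^ p
      ≤ ((∫⁻ y, k y * (w y)⁻¹ ^ p * F y ^ p ∂ν) ^ (1 / p) *
          (∫⁻ y, k y * w y ^ q ∂ν) ^ (1 / q)) ^ p := ENNReal.rpow_le_rpow hHolder hp.le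
    _ = _ := by
      rw [ENNReal.mul_rpow_of_nonneg _ _ hp.le, ← ENNReal.rpow_mul, ← ENNReal.rpow_mul,
        one_div_mul_cancel hp.ne', ENNReal.rpow_one, one_div_mul_eq_div, mul_comm]

theorem lintegral_mul_lintegral_swap [SFinite μ] [SFinite ν] {k : X → Y → ℝ≥0∞}
    (hk : Measurable (Function.uncurry k)) {f : X → ℝ≥0∞} {g : Y → ℝ≥0∞} (hf : Measurable f)
    (hg : Measurable g) :
    ∫⁻ x, f x * ∫⁻ y, k x y * g y ∂ν ∂μ = ∫⁻ y, g y * ∫⁻ x, k x y * f x ∂μ ∂ν := by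
  calc ∫⁻ x, f x * ∫⁻ y, k x y * g y ∂ν ∂μ
      = ∫⁻ x, ∫⁻ y, f x * (k x y * g y) ∂ν ∂μ := by
        refine lintegral_congr fun x => (lintegral_const_mul _ ?_).symm
        exact (hk.comp measurable_prodMk_left).mul hg
    _ = ∫⁻ y, ∫⁻ x, f x * (k x y * g y) ∂μ ∂ν :=
        lintegral_lintegral_swap
          ((hf.comp measurable_fst).mul (hk.mul (hg.comp measurable_snd))).aemeasurable
    _ = ∫⁻ y, g y * ∫⁻ x, k x y * f x ∂μ ∂ν := by
        refine lintegral_congr fun y => ?_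
        have hmeas : Measurable fun x => k x y * f x := (hk.comp measurable_prodMk_right).mul hf
        rw [← lintegral_const_mul _ hmeas]
        congr 1 with x
        ring

theorem lintegral_rpow_lintegral_le_of_schur [SFinite μ] [SFinite ν] (hpq : p.HolderConjugate q)
    {k : X → Y → ℝ≥0∞} (hk : Measurable (Function.uncurry k)) {φ : Y → ℝ≥0∞} {ψ : X → ℝ≥0∞}
    (hφ : Measurable φ) (hψ : Measurable ψ) (hφ₀ : ∀ᵐ y ∂ν, φ y ≠ 0) (hφ_top : ∀ᵐ y ∂ν, φ y ≠ ∞)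
    {C₁ C₂ : ℝ≥0∞} (h₁ : ∀ᵐ x ∂μ, ∫⁻ y, k x y * φ y ^ q ∂ν ≤ C₁ * ψ x ^ q)
    (h₂ : ∀ᵐ y ∂ν, ∫⁻ x, k x y * ψ x ^ p ∂μ ≤ C₂ * φ y ^ p) {F : Y → ℝ≥0∞} (hF : Measurable F) :
    ∫⁻ x, (∫⁻ y, k x y * F y ∂ν) ^ p ∂μ ≤ C₁ ^ (p / q) * C₂ * ∫⁻ y, F y ^ p ∂ν := by
  have hp := hpq.pos
  have hq := hpq.symm.pos
  set G : Y → ℝ≥0∞ := fun y => (φ y)⁻¹ ^ p * F y ^ p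
  have hG : Measurable G := by fun_prop
  have hpointwise : ∀ᵐ x ∂μ, (∫⁻ y, k x y * F y ∂ν) ^ p ≤
      C₁ ^ (p / q) * (ψ x ^ p * ∫⁻ y, k x y * G y ∂ν) := by
    filter_upwards [h₁] with x hx
    calc (∫⁻ y, k x y * F y ∂ν) ^ p
        ≤ (∫⁻ y, k x y * φ y ^ q ∂ν) ^ (p / q) * ∫⁻ y, k x y * (φ y)⁻¹ ^ p * F y ^ p ∂ν :=
          rpow_lintegral_mul_le_of_weight hpq (hk.comp measurable_prodMk_left) hF hφ hφ₀ hφ_top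
      _ ≤ (C₁ * ψ x ^ q) ^ (p / q) * ∫⁻ y, k x y * G y ∂ν := by
          simp only [G, mul_assoc]
          gcongr
      _ = C₁ ^ (p / q) * (ψ x ^ p * ∫⁻ y, k x y * G y ∂ν) := by
          rw [ENNReal.mul_rpow_of_nonneg _ _ (by positivity), ← ENNReal.rpow_mul,
            mul_div_cancel₀ _ hq.ne', mul_assoc]
  have hcancel : ∀ᵐ y ∂ν, G y * (C₂ * φ y ^ p) = C₂ * F y ^ p := by
    filter_upwards [hφ₀, hφ_top] with y h₀ h_top
    have hinv : (φ y)⁻¹ ^ p * φ y ^ p = 1 := by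
      rw [ENNReal.inv_rpow, ENNReal.inv_mul_cancel (ENNReal.rpow_pos_of_nonneg
        (pos_iff_ne_zero.2 h₀) hp.le).ne' (ENNReal.rpow_ne_top_of_nonneg hp.le h_top)]
    calc G y * (C₂ * φ y ^ p) = C₂ * F y ^ p * ((φ y)⁻¹ ^ p * φ y ^ p) := by ring
      _ = C₂ * F y ^ p := by rw [hinv, mul_one]
  calc ∫⁻ x, (∫⁻ y, k x y * F y ∂ν) ^ p ∂μ
      ≤ ∫⁻ x, C₁ ^ (p / q) * (ψ x ^ p * ∫⁻ y, k x y * G y ∂ν) ∂μ := lintegral_mono_ae hpointwise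
    _ ≤ C₁ ^ (p / q) * ∫⁻ y, G y * (C₂ * φ y ^ p) ∂ν := by
      have hmeas : Measurable fun x => ψ x ^ p * ∫⁻ y, k x y * G y ∂ν :=
        (hψ.pow_const p).mul (hk.mul (hG.comp measurable_snd)).lintegral_prod_right'
      rw [lintegral_const_mul _ hmeas, lintegral_mul_lintegral_swap hk (hψ.pow_const p) hG]
      gcongr 1
      exact lintegral_mono_ae (by filter_upwards [h₂] with y hy; gcongr)
    _ = C₁ ^ (p / q) * C₂ * ∫⁻ y, F y ^ p ∂ν := by
      rw [lintegral_congr_ae hcancel, lintegral_const_mul _ (hF.pow_const p), mul_assoc]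

end Schur

theorem lintegral_Ioi_comp_mul_left {F : ℝ → ℝ≥0∞} (hF : Measurable F) {a : ℝ} (ha : 0 < a) :
    ∫⁻ x in Ioi 0, F (a * x) = ENNReal.ofReal a⁻¹ * ∫⁻ x in Ioi 0, F x := by
  have hind : (Ioi 0).indicator (fun x => F (a * x)) = fun x => (Ioi 0).indicator F (a * x) := by
    ext x
    simp only [indicator, mem_Ioi, mul_pos_iff_of_pos_left ha]
  rw [← lintegral_indicator measurableSet_Ioi, ← lintegral_indicator measurableSet_Ioi, hind,
    ← lintegral_map (hF.indicator measurableSet_Ioi) (measurable_const_mul a),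
    Real.map_volume_mul_left ha.ne', lintegral_smul_measure, abs_of_pos (inv_pos.2 ha),
    smul_eq_mul]

section HomogeneousKernel

variable {k : ℝ → ℝ → ℝ≥0∞}

theorem lintegral_Ioi_kernel_mul_rpow_right (hk : Measurable (Function.uncurry k))
    (hhom : ∀ a > 0, ∀ t s, k (a * t) (a * s) = ENNReal.ofReal a⁻¹ * k t s) (c : ℝ) {t : ℝ}
    (ht : 0 < t) :
    ∫⁻ s in Ioi 0, k t s * ENNReal.ofReal (s ^ c) =
      ENNReal.ofReal (t ^ c) * ∫⁻ u in Ioi 0, k 1 u * ENNReal.ofReal (u ^ c) := by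
  have hmeas : Measurable fun s => k t s * ENNReal.ofReal (s ^ c) :=
    (hk.comp measurable_prodMk_left).mul (measurable_id.pow_const c).ennreal_ofReal
  have hscale : ∀ u ∈ Ioi (0 : ℝ), k t (t * u) * ENNReal.ofReal ((t * u) ^ c) =
      ENNReal.ofReal t⁻¹ * ENNReal.ofReal (t ^ c) * (k 1 u * ENNReal.ofReal (u ^ c)) := by
    intro u hu
    have hk_tu := hhom t ht 1 u
    rw [mul_one] at hk_tu
    rw [hk_tu, Real.mul_rpow ht.le (le_of_lt hu), ENNReal.ofReal_mul (by positivity)]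
    ring
  have hcancel : ENNReal.ofReal t * ENNReal.ofReal t⁻¹ = 1 := by
    rw [← ENNReal.ofReal_mul ht.le, mul_inv_cancel₀ ht.ne', ENNReal.ofReal_one]
  calc ∫⁻ s in Ioi 0, k t s * ENNReal.ofReal (s ^ c)
      = ENNReal.ofReal t * ∫⁻ u in Ioi 0, k t (t * u) * ENNReal.ofReal ((t * u) ^ c) := by
        rw [lintegral_Ioi_comp_mul_left hmeas ht, ← mul_assoc, hcancel, one_mul]
    _ = ENNReal.ofReal t * (ENNReal.ofReal t⁻¹ * ENNReal.ofReal (t ^ c) *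
          ∫⁻ u in Ioi 0, k 1 u * ENNReal.ofReal (u ^ c)) := by
        rw [setLIntegral_congr_fun measurableSet_Ioi hscale, lintegral_const_mul' _ _
          (ENNReal.mul_ne_top ENNReal.ofReal_ne_top ENNReal.ofReal_ne_top)]
    _ = ENNReal.ofReal (t ^ c) * ∫⁻ u in Ioi 0, k 1 u * ENNReal.ofReal (u ^ c) := by
        rw [← mul_assoc, ← mul_assoc, hcancel, one_mul]

theorem lintegral_Ioi_kernel_mul_rpow_left (hk : Measurable (Function.uncurry k))
    (hhom : ∀ a > 0, ∀ t s, k (a * t) (a * s) = ENNReal.ofReal a⁻¹ * k t s) (c : ℝ) {s : ℝ}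
    (hs : 0 < s) :
    ∫⁻ t in Ioi 0, k t s * ENNReal.ofReal (t ^ c) =
      ENNReal.ofReal (s ^ c) * ∫⁻ r in Ioi 0, k r 1 * ENNReal.ofReal (r ^ c) :=
  lintegral_Ioi_kernel_mul_rpow_right (k := fun s t => k t s) (hk.comp measurable_swap)
    (fun a ha t s => hhom a ha s t) c hs

theorem lintegral_Ioi_rpow_lintegral_kernel_le {p q : ℝ} (hpq : p.HolderConjugate q)
    (hk : Measurable (Function.uncurry k))
    (hhom : ∀ a > 0, ∀ t s, k (a * t) (a * s) = ENNReal.ofReal a⁻¹ * k t s)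
    {F : ℝ → ℝ≥0∞} (hF : Measurable F) :
    ∫⁻ t in Ioi 0, (∫⁻ s in Ioi 0, k t s * F s) ^ p ≤
      (∫⁻ u in Ioi 0, k 1 u * ENNReal.ofReal (u ^ (-(1 / p)))) ^ (p / q) *
        (∫⁻ r in Ioi 0, k r 1 * ENNReal.ofReal (r ^ (-(1 / q)))) * ∫⁻ s in Ioi 0, F s ^ p := by
  have hp := hpq.pos
  have hq := hpq.symm.pos
  set w : ℝ → ℝ≥0∞ := fun s => ENNReal.ofReal (s ^ (-(1 / (p * q))))
  have hw : Measurable w := (measurable_id.pow_const _).ennreal_ofReal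
  have hw_rpow : ∀ {b : ℝ}, 0 < b → ∀ s ∈ Ioi (0 : ℝ),
      w s ^ b = ENNReal.ofReal (s ^ (-(1 / (p * q)) * b)) := fun hb s hs => by
    rw [ENNReal.ofReal_rpow_of_nonneg (Real.rpow_nonneg (le_of_lt hs) _) hb.le,
      ← Real.rpow_mul (le_of_lt hs)]
  have hwq : ∀ s ∈ Ioi (0 : ℝ), w s ^ q = ENNReal.ofReal (s ^ (-(1 / p))) := fun s hs => by
    rw [hw_rpow hq s hs]; congr 2; field_simp
  have hwp : ∀ s ∈ Ioi (0 : ℝ), w s ^ p = ENNReal.ofReal (s ^ (-(1 / q))) := fun s hs => by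
    rw [hw_rpow hp s hs]; congr 2; field_simp
  refine lintegral_rpow_lintegral_le_of_schur hpq hk hw hw ?_
    (ae_of_all _ fun _ => ENNReal.ofReal_ne_top) ?_ ?_ hF
  · filter_upwards [ae_restrict_mem measurableSet_Ioi] with s hs
    exact (ENNReal.ofReal_pos.2 (Real.rpow_pos_of_pos hs _)).ne'
  · filter_upwards [ae_restrict_mem measurableSet_Ioi] with t ht
    rw [setLIntegral_congr_fun measurableSet_Ioi (fun s hs => by rw [hwq s hs]),
      lintegral_Ioi_kernel_mul_rpow_right hk hhom _ ht, hwq t ht, mul_comm]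
  · filter_upwards [ae_restrict_mem measurableSet_Ioi] with s hs
    rw [setLIntegral_congr_fun measurableSet_Ioi (fun t ht => by rw [hwp t ht]),
      lintegral_Ioi_kernel_mul_rpow_left hk hhom _ hs, hwp s hs, mul_comm]

end HomogeneousKernel

theorem abs_exp_sub_one_le_mul_max (a : ℝ) : |exp a - 1| ≤ |a| * max (exp a) 1 := by
  rcases le_or_gt 0 a with ha | ha
  · have h := one_sub_le_exp_neg a
    have hexp : exp (-a) * exp a = 1 := by rw [← exp_add, neg_add_cancel, exp_zero]
    rw [abs_of_nonneg (by linarith [one_le_exp ha]), abs_of_nonneg ha]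
    nlinarith [exp_pos a, le_max_left (exp a) 1]
  · have h := add_one_le_exp a
    rw [abs_of_nonpos (by linarith [exp_lt_one_iff.2 ha]), abs_of_neg ha]
    nlinarith [le_max_right (exp a) 1]

section RpowSubOne

variable {α r : ℝ}

theorem abs_rpow_sub_one_le_mul (hr : 1 ≤ r) : |r ^ α - 1| ≤ |α| * (r - 1) * r ^ max α 0 := by
  have hr₀ : 0 < r := by linarith
  have hlog : 0 ≤ log r := log_nonneg hr
  have hmax : max (r ^ α) 1 ≤ r ^ max α 0 :=
    max_le (rpow_le_rpow_of_exponent_le hr (le_max_left _ _))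
      (one_le_rpow hr (le_max_right _ _))
  calc |r ^ α - 1| ≤ |log r * α| * max (r ^ α) 1 := by
        rw [rpow_def_of_pos hr₀]; exact abs_exp_sub_one_le_mul_max _
    _ ≤ |α| * (r - 1) * r ^ max α 0 := by
        rw [abs_mul, abs_of_nonneg hlog, mul_comm (log r)]
        gcongr
        exact (log_le_sub_one_of_pos hr₀)

theorem abs_rpow_sub_one_le_rpow (hr : 1 ≤ r) : |r ^ α - 1| ≤ r ^ max α 0 := by
  have h₁ : r ^ α ≤ r ^ max α 0 := rpow_le_rpow_of_exponent_le hr (le_max_left _ _)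
  have h₂ : 1 ≤ r ^ max α 0 := one_le_rpow hr (le_max_right _ _)
  have h₃ : 0 < r ^ α := rpow_pos_of_pos (by linarith) _
  rw [abs_le]
  constructor <;> linarith

theorem abs_rpow_sub_one_mul_div_le (hr : 1 < r) :
    |r ^ α - 1| * r / (r - 1) ≤ 2 * max |α| 1 * r ^ max α 0 := by
  rw [div_le_iff₀ (sub_pos.2 hr)]
  have hβ : 0 ≤ r ^ max α 0 := rpow_nonneg (by linarith) _
  have hα₁ : |α| ≤ max |α| 1 := le_max_left _ _
  have h₁ : 1 ≤ max |α| 1 := le_max_right _ _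
  rcases le_or_gt r 2 with hr₂ | hr₂
  · have h := abs_rpow_sub_one_le_mul (α := α) hr.le
    have : 0 ≤ |α| * (r - 1) * r ^ max α 0 :=
      mul_nonneg (mul_nonneg (abs_nonneg α) (sub_nonneg.2 hr.le)) hβ
    nlinarith [mul_le_mul_of_nonneg_right hα₁ (mul_nonneg (sub_nonneg.2 hr.le) hβ)]
  · have h := abs_rpow_sub_one_le_rpow (α := α) hr.le
    nlinarith [mul_le_mul_of_nonneg_right h₁ (mul_nonneg (sub_nonneg.2 hr.le) hβ)]

end RpowSubOne

noncomputable def powerRatioKernel (α t s : ℝ) : ℝ≥0∞ :=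
  if 0 < s ∧ s < t then ENNReal.ofReal (|(t / s) ^ α - 1| / (t - s)) else 0

namespace powerRatioKernel

variable {α : ℝ}

theorem measurable_uncurry : Measurable (Function.uncurry (powerRatioKernel α)) := by
  refine Measurable.ite ?_ ?_ measurable_const
  · exact (measurableSet_lt measurable_const measurable_snd).inter
      (measurableSet_lt measurable_snd measurable_fst)
  · fun_prop

theorem apply_mul_mul {a : ℝ} (ha : 0 < a) (t s : ℝ) :
    powerRatioKernel α (a * t) (a * s) = ENNReal.ofReal a⁻¹ * powerRatioKernel α t s := by
  simp only [powerRatioKernel, mul_pos_iff_of_pos_left ha, mul_lt_mul_iff_right₀ ha]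
  split_ifs
  · rw [mul_div_mul_left _ _ ha.ne', ← mul_sub, ← ENNReal.ofReal_mul (inv_nonneg.2 ha.le)]
    congr 1
    field_simp
  · rw [mul_zero]

theorem one_left_le {u : ℝ} (hu₀ : 0 < u) (hu₁ : u < 1) :
    powerRatioKernel α 1 u ≤ ENNReal.ofReal (2 * max |α| 1 * u ^ (-max α 0)) := by
  have hr : 1 < u⁻¹ := one_lt_inv₀ hu₀ |>.2 hu₁
  have h := abs_rpow_sub_one_mul_div_le (α := α) hr
  rw [powerRatioKernel, if_pos ⟨hu₀, hu₁⟩, one_div]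
  refine ENNReal.ofReal_le_ofReal (le_of_eq_of_le ?_ (h.trans_eq ?_))
  · field_simp
  · rw [inv_rpow hu₀.le, rpow_neg hu₀.le]

theorem one_right_le {r : ℝ} (hr : 1 < r) :
    powerRatioKernel α r 1 ≤ ENNReal.ofReal (2 * max |α| 1 * r ^ (max α 0 - 1)) := by
  have h := abs_rpow_sub_one_mul_div_le (α := α) hr
  have hr₀ : 0 < r := by linarith
  rw [powerRatioKernel, if_pos ⟨one_pos, hr⟩, div_one]
  refine ENNReal.ofReal_le_ofReal ?_
  rw [rpow_sub hr₀, rpow_one, ← mul_div_assoc, le_div_iff₀ hr₀]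
  calc |r ^ α - 1| / (r - 1) * r = |r ^ α - 1| * r / (r - 1) := by ring
    _ ≤ _ := h

theorem lintegral_one_left_lt_top {c : ℝ} (hc : max α 0 - c < 1) :
    ∫⁻ u in Ioi 0, powerRatioKernel α 1 u * ENNReal.ofReal (u ^ c) < ∞ := by
  set K := 2 * max |α| 1
  have hbound : ∀ u, powerRatioKernel α 1 u * ENNReal.ofReal (u ^ c) ≤
      (Ioo 0 1).indicator (fun u => ENNReal.ofReal (K * u ^ (c - max α 0))) u := by
    intro u
    by_cases hu : 0 < u ∧ u < 1
    · rw [indicator_of_mem (show u ∈ Ioo 0 1 from hu)]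
      calc powerRatioKernel α 1 u * ENNReal.ofReal (u ^ c)
          ≤ ENNReal.ofReal (K * u ^ (-max α 0)) * ENNReal.ofReal (u ^ c) := by
            gcongr; exact one_left_le hu.1 hu.2
        _ = ENNReal.ofReal (K * u ^ (c - max α 0)) := by
            rw [← ENNReal.ofReal_mul (mul_nonneg (by positivity) (rpow_nonneg hu.1.le _)),
              mul_assoc, ← rpow_add hu.1, neg_add_eq_sub]
    · simp [powerRatioKernel, hu]
  have hint : IntegrableOn (fun u : ℝ => K * u ^ (c - max α 0)) (Ioo 0 1) :=
    ((intervalIntegral.integrableOn_Ioo_rpow_iff one_pos).2 (by linarith)).const_mul K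
  calc ∫⁻ u in Ioi 0, powerRatioKernel α 1 u * ENNReal.ofReal (u ^ c)
      ≤ ∫⁻ u, (Ioo 0 1).indicator (fun u => ENNReal.ofReal (K * u ^ (c - max α 0))) u :=
        (setLIntegral_le_lintegral _ _).trans (lintegral_mono hbound)
    _ < ∞ := by
        rw [lintegral_indicator measurableSet_Ioo]
        exact hint.lintegral_lt_top

theorem lintegral_one_right_lt_top {c : ℝ} (hc : max α 0 + c < 0) :
    ∫⁻ r in Ioi 0, powerRatioKernel α r 1 * ENNReal.ofReal (r ^ c) < ∞ := by
  set K := 2 * max |α| 1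
  have hbound : ∀ r, powerRatioKernel α r 1 * ENNReal.ofReal (r ^ c) ≤
      (Ioi 1).indicator (fun r => ENNReal.ofReal (K * r ^ (max α 0 - 1 + c))) r := by
    intro r
    by_cases hr : 1 < r
    · rw [indicator_of_mem (show r ∈ Ioi 1 from hr)]
      calc powerRatioKernel α r 1 * ENNReal.ofReal (r ^ c)
          ≤ ENNReal.ofReal (K * r ^ (max α 0 - 1)) * ENNReal.ofReal (r ^ c) := by
            gcongr; exact one_right_le hr
        _ = ENNReal.ofReal (K * r ^ (max α 0 - 1 + c)) := by
            rw [← ENNReal.ofReal_mul (by positivity), mul_assoc, ← rpow_add (by linarith)]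
    · simp [powerRatioKernel, hr]
  have hint : IntegrableOn (fun r : ℝ => K * r ^ (max α 0 - 1 + c)) (Ioi 1) :=
    ((integrableOn_Ioi_rpow_iff one_pos).2 (by linarith)).const_mul K
  calc ∫⁻ r in Ioi 0, powerRatioKernel α r 1 * ENNReal.ofReal (r ^ c)
      ≤ ∫⁻ r, (Ioi 1).indicator (fun r => ENNReal.ofReal (K * r ^ (max α 0 - 1 + c))) r :=
        (setLIntegral_le_lintegral _ _).trans (lintegral_mono hbound)
    _ < ∞ := by
        rw [lintegral_indicator measurableSet_Ioi]
        exact hint.lintegral_lt_top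

theorem exists_lintegral_rpow_le {p : ℝ} (hp : 1 < p) (hα : α < 1 - 1 / p) :
    ∃ C : ℝ≥0, ∀ F : ℝ → ℝ≥0∞, Measurable F →
      ∫⁻ t in Ioi 0, (∫⁻ s in Ioi 0, powerRatioKernel α t s * F s) ^ p ≤
        C * ∫⁻ s in Ioi 0, F s ^ p := by
  have hpq := Real.HolderConjugate.conjExponent hp
  have hp₁ : 1 / p < 1 := (div_lt_one (by linarith)).2 hp
  have hq : 1 / p.conjExponent = 1 - 1 / p := by
    rw [one_div, one_div, ← hpq.one_sub_inv]
  have hC₁ := lintegral_one_left_lt_top (α := α) (c := -(1 / p))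
    (by linarith [max_lt hα (sub_pos.2 hp₁)])
  have hC₂ := lintegral_one_right_lt_top (α := α) (c := -(1 / p.conjExponent))
    (by linarith [max_lt hα (sub_pos.2 hp₁)])
  refine ⟨((∫⁻ u in Ioi 0, powerRatioKernel α 1 u * ENNReal.ofReal (u ^ (-(1 / p)))) ^
    (p / p.conjExponent) * ∫⁻ r in Ioi 0, powerRatioKernel α r 1 *
      ENNReal.ofReal (r ^ (-(1 / p.conjExponent)))).toNNReal, fun F hF => ?_⟩
  rw [ENNReal.coe_toNNReal (ENNReal.mul_ne_top
    (ENNReal.rpow_ne_top_of_nonneg (div_nonneg (by linarith) hpq.symm.nonneg) hC₁.ne) hC₂.ne)]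
  exact lintegral_Ioi_rpow_lintegral_kernel_le hpq measurable_uncurry
    (fun a ha => apply_mul_mul ha) hF

theorem enorm_integral_Ioo_le {𝕜 : Type*} [NormedRing 𝕜] [NormedSpace ℝ 𝕜] {K : ℝ → 𝕜} {M : ℝ}
    (hM : 0 ≤ M) (hK : ∀ t, 0 < t → ‖K t‖ ≤ M / t) (f : ℝ → 𝕜) (t : ℝ) :
    ‖∫ s in Ioo 0 t, ((t / s) ^ α - 1 : ℝ) • (K (t - s) * f s)‖ₑ ≤
      ENNReal.ofReal M * ∫⁻ s in Ioi 0, powerRatioKernel α t s * ‖f s‖ₑ := by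
  have hpointwise : ∀ s ∈ Ioo 0 t, ‖((t / s) ^ α - 1 : ℝ) • (K (t - s) * f s)‖ₑ ≤
      ENNReal.ofReal M * (powerRatioKernel α t s * ‖f s‖ₑ) := by
    intro s hs
    have hts : 0 < t - s := sub_pos.2 hs.2
    calc ‖((t / s) ^ α - 1 : ℝ) • (K (t - s) * f s)‖ₑ
        ≤ ENNReal.ofReal |(t / s) ^ α - 1| * (ENNReal.ofReal (M / (t - s)) * ‖f s‖ₑ) := by
          rw [enorm_smul, ← ofReal_norm, Real.norm_eq_abs]
          gcongr
          have hmul : ‖K (t - s) * f s‖ₑ ≤ ‖K (t - s)‖ₑ * ‖f s‖ₑ := by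
            simpa only [enorm_eq_nnnorm, ← ENNReal.coe_mul, ENNReal.coe_le_coe]
              using nnnorm_mul_le (K (t - s)) (f s)
          refine hmul.trans ?_
          gcongr
          rw [← ofReal_norm]
          exact ENNReal.ofReal_le_ofReal (hK _ hts)
      _ = ENNReal.ofReal M * (powerRatioKernel α t s * ‖f s‖ₑ) := by
          rw [powerRatioKernel, if_pos ⟨hs.1, hs.2⟩, ← mul_assoc, ← mul_assoc,
            ← ENNReal.ofReal_mul (abs_nonneg _), ← ENNReal.ofReal_mul hM]
          congr 2
          ring
  calc ‖∫ s in Ioo 0 t, ((t / s) ^ α - 1 : ℝ) • (K (t - s) * f s)‖ₑ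
      ≤ ∫⁻ s in Ioo 0 t, ‖((t / s) ^ α - 1 : ℝ) • (K (t - s) * f s)‖ₑ :=
        enorm_integral_le_lintegral_enorm _
    _ ≤ ∫⁻ s in Ioo 0 t, ENNReal.ofReal M * (powerRatioKernel α t s * ‖f s‖ₑ) :=
        setLIntegral_mono' measurableSet_Ioo hpointwise
    _ ≤ ∫⁻ s in Ioi 0, ENNReal.ofReal M * (powerRatioKernel α t s * ‖f s‖ₑ) :=
        lintegral_mono_set Ioo_subset_Ioi_self
    _ = ENNReal.ofReal M * ∫⁻ s in Ioi 0, powerRatioKernel α t s * ‖f s‖ₑ :=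
        lintegral_const_mul' _ _ ENNReal.ofReal_ne_top

theorem lintegral_enorm_integral_Ioo_rpow_le {𝕜 : Type*} [NormedRing 𝕜] [NormedSpace ℝ 𝕜]
    [MeasurableSpace 𝕜] [OpensMeasurableSpace 𝕜] {p : ℝ} (hp : 0 ≤ p) {C : ℝ≥0}
    (hC : ∀ F : ℝ → ℝ≥0∞, Measurable F →
      ∫⁻ t in Ioi 0, (∫⁻ s in Ioi 0, powerRatioKernel α t s * F s) ^ p ≤
        C * ∫⁻ s in Ioi 0, F s ^ p)
    {K : ℝ → 𝕜} {M : ℝ} (hM : 0 ≤ M) (hK : ∀ t, 0 < t → ‖K t‖ ≤ M / t) {f : ℝ → 𝕜}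
    (hf : Measurable f) :
    ∫⁻ t in Ioi 0, ‖∫ s in Ioo 0 t, ((t / s) ^ α - 1 : ℝ) • (K (t - s) * f s)‖ₑ ^ p ≤
      ENNReal.ofReal (M ^ p * C) * ∫⁻ s in Ioi 0, ‖f s‖ₑ ^ p :=
  calc _ ≤ ∫⁻ t in Ioi 0,
        (ENNReal.ofReal M * ∫⁻ s in Ioi 0, powerRatioKernel α t s * ‖f s‖ₑ) ^ p :=
        lintegral_mono fun t => ENNReal.rpow_le_rpow (enorm_integral_Ioo_le hM hK f t) hp
    _ = ENNReal.ofReal M ^ p *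
          ∫⁻ t in Ioi 0, (∫⁻ s in Ioi 0, powerRatioKernel α t s * ‖f s‖ₑ) ^ p := by
        simp only [ENNReal.mul_rpow_of_nonneg _ _ hp]
        exact lintegral_const_mul' _ _ (ENNReal.rpow_ne_top_of_nonneg hp ENNReal.ofReal_ne_top)
    _ ≤ ENNReal.ofReal M ^ p * (C * ∫⁻ s in Ioi 0, ‖f s‖ₑ ^ p) := by
        gcongr; exact hC _ hf.enorm
    _ = ENNReal.ofReal (M ^ p * C) * ∫⁻ s in Ioi 0, ‖f s‖ₑ ^ p := by
        rw [ENNReal.ofReal_mul (by positivity), ENNReal.ofReal_rpow_of_nonneg hM hp,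
          ENNReal.ofReal_coe_nnreal, mul_assoc]

end powerRatioKernel

theorem ofReal_norm_rpow {E : Type*} [SeminormedAddCommGroup E] (x : E) {p : ℝ} (hp : 0 ≤ p) :
    ENNReal.ofReal (‖x‖ ^ p) = ‖x‖ₑ ^ p := by
  rw [← ENNReal.ofReal_rpow_of_nonneg (norm_nonneg _) hp, ofReal_norm]

theorem integral_norm_rpow_le_of_lintegral_le {X Y E F : Type*} [MeasurableSpace X]
    [MeasurableSpace Y] [NormedAddCommGroup E] [NormedAddCommGroup F] {μ : Measure X}
    {ν : Measure Y} {u : X → E} {v : Y → F} {p C : ℝ} (hp : 0 ≤ p) (hC : 0 ≤ C)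
    (hv : Integrable (fun y => ‖v y‖ ^ p) ν)
    (h : ∫⁻ x, ‖u x‖ₑ ^ p ∂μ ≤ ENNReal.ofReal C * ∫⁻ y, ‖v y‖ₑ ^ p ∂ν) :
    ∫ x, ‖u x‖ ^ p ∂μ ≤ C * ∫ y, ‖v y‖ ^ p ∂ν := by
  by_cases hu : Integrable (fun x => ‖u x‖ ^ p) μ
  · have hv_fin := hv.lintegral_lt_top
    rw [lintegral_congr fun y => ofReal_norm_rpow (v y) hp] at hv_fin
    rw [integral_eq_lintegral_of_nonneg_ae (ae_of_all _ fun _ => by positivity) hu.1,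
      integral_eq_lintegral_of_nonneg_ae (ae_of_all _ fun _ => by positivity) hv.1,
      lintegral_congr fun x => ofReal_norm_rpow (u x) hp,
      lintegral_congr fun y => ofReal_norm_rpow (v y) hp]
    calc (∫⁻ x, ‖u x‖ₑ ^ p ∂μ).toReal ≤ (ENNReal.ofReal C * ∫⁻ y, ‖v y‖ₑ ^ p ∂ν).toReal :=
          ENNReal.toReal_mono (ENNReal.mul_ne_top ENNReal.ofReal_ne_top hv_fin.ne) h
      _ = C * (∫⁻ y, ‖v y‖ₑ ^ p ∂ν).toReal := by rw [ENNReal.toReal_mul, ENNReal.toReal_ofReal hC]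
  · rw [integral_undef hu]
    exact mul_nonneg hC (integral_nonneg fun _ => by positivity)

/-- (scalar Prüss–Simonett estimate) Let `p ∈ (1,∞)`, `α < 1 - 1/p`.
There is a constant `c = c(p,α)` such that for every continuous `K : (0,∞) → ℂ` with
`|K(t)| ≤ M/t`, the operator `(Tf)(t) = ∫_0^t K(t-s)[(t/s)^α - 1] f(s) ds` is
bounded on `L^p(0,∞)` with norm at most `c·M`. -/
theorem stmt6 (p α : ℝ) (hp : 1 < p) (hα : α < 1 - 1 / p) :
    ∃ c : ℝ, 0 ≤ c ∧
      ∀ (K : ℝ → ℂ) (M : ℝ), 0 ≤ M → ContinuousOn K (Ioi 0) →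
        (∀ t : ℝ, 0 < t → ‖K t‖ ≤ M / t) →
        ∀ f : ℝ → ℂ, Measurable f → IntegrableOn (fun s => ‖f s‖ ^ p) (Ioi 0) →
          (∫ t in Ioi (0:ℝ),
              ‖∫ s in Ioo 0 t, ((t / s) ^ α - 1 : ℝ) • (K (t - s) * f s)‖ ^ p) ^ (1/p)
            ≤ c * M * (∫ s in Ioi (0:ℝ), ‖f s‖ ^ p) ^ (1/p) := by
  have hp₀ : 0 < p := by linarith
  obtain ⟨C, hC⟩ := powerRatioKernel.exists_lintegral_rpow_le hp hα
  refine ⟨(C : ℝ) ^ (1 / p), by positivity, fun K M hM _ hK f hf hfp => ?_⟩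
  calc _ ≤ (M ^ p * C * ∫ s in Ioi 0, ‖f s‖ ^ p) ^ (1 / p) :=
        rpow_le_rpow (integral_nonneg fun _ => by positivity)
          (integral_norm_rpow_le_of_lintegral_le hp₀.le (by positivity) hfp
            (powerRatioKernel.lintegral_enorm_integral_Ioo_rpow_le hp₀.le hC hM hK hf))
          (by positivity)
    _ = (C : ℝ) ^ (1 / p) * M * (∫ s in Ioi 0, ‖f s‖ ^ p) ^ (1 / p) := by
        rw [mul_rpow (by positivity) (integral_nonneg fun _ => by positivity),
          mul_rpow (by positivity) C.coe_nonneg, ← rpow_mul hM, mul_one_div_cancel hp₀.ne',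
          rpow_one]
        ring
end

section
/- Let -A generate a bounded, uniformly exponentially stable strongly continuous semigroup T(·) on a Banach space X (‖T(t)‖ ≤ c e^{-εt} for some c, ε > 0), let C ∈ B(D(A^k), Y), p ∈ [1,∞), α > -1/p, and suppose there exist τ > 0 and M_τ with (∫_0^τ ‖t^α C T(t)x‖^p dt)^{1/p} ≤ M_τ ‖x‖ for all x ∈ D(A^k). Then there is M < ∞ with (∫_0^∞ ‖t^α C T(t)x‖^p dt)^{1/p} ≤ M‖x‖ for all x ∈ D(A^k); i.e. finite-time L^p-admissibility of type α implies infinite-time L^p-admissibility of type α for observation operators under exponential stability. -/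
open MeasureTheory Set Real
open scoped ENNReal

lemma lintegral_Ioc_shift (f : ℝ → ℝ≥0∞) (a b c : ℝ) :
    ∫⁻ t in Ioc (a + c) (b + c), f t = ∫⁻ s in Ioc a b, f (s + c) := by
  have hrm : (volume : Measure ℝ).restrict (Ioc (a+c) (b+c))
      = Measure.map (· + c) (volume.restrict (Ioc a b)) := by
    conv_lhs => rw [← map_add_right_eq_self (volume : Measure ℝ) c]
    rw [Measure.restrict_map (measurable_add_const c) measurableSet_Ioc,
        preimage_add_const_Ioc]
    norm_num
  have hme : Measure.map (· + c) (volume.restrict (Ioc a b))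
      = Measure.map (MeasurableEquiv.addRight c) (volume.restrict (Ioc a b)) := rfl
  rw [hrm, hme, lintegral_map_equiv]
  rfl


set_option maxHeartbeats 1000000 in
/-- If `-A` generates a uniformly exponentially stable semigroup
(`‖T(t)x‖ ≤ c e^{-εt}‖x‖`), `C` is an observation operator (modelled as a linear map),
`p ∈ [1,∞)`, `α > -1/p`, and `C` is finite-time `L^p`-admissible of type `α`
(`(∫_0^τ ‖t^α CT(t)x‖^p dt)^{1/p} ≤ M_τ ‖x‖`), then `C` is infinite-time
`L^p`-admissible of type `α`: there is `M` with
`(∫_0^∞ ‖t^α CT(t)x‖^p dt)^{1/p} ≤ M ‖x‖` for all `x`. -/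
theorem stmt14 {X Y : Type*} [NormedAddCommGroup X] [NormedSpace ℝ X]
    [NormedAddCommGroup Y] [NormedSpace ℝ Y]
    (T : ℝ → X →L[ℝ] X)
    (hsg : ∀ s t : ℝ, 0 ≤ s → 0 ≤ t → T (s + t) = T s ∘L T t)
    (c ε : ℝ) (hc : 0 < c) (hε : 0 < ε)
    (hstab : ∀ t : ℝ, 0 ≤ t → ∀ x : X, ‖T t x‖ ≤ c * Real.exp (-ε * t) * ‖x‖)
    (C : X →ₗ[ℝ] Y) (p α : ℝ) (hp : 1 ≤ p) (hα : -(1 / p) < α)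
    (τ Mτ : ℝ) (hτ : 0 < τ) (hMτ : 0 ≤ Mτ)
    (hfin : ∀ x : X,
      (∫⁻ t in Ioo (0:ℝ) τ, ENNReal.ofReal ((t ^ α * ‖C (T t x)‖) ^ p)) ^ (1/p)
        ≤ ENNReal.ofReal (Mτ * ‖x‖)) :
    ∃ M : ℝ, 0 ≤ M ∧ ∀ x : X,
      (∫⁻ t in Ioi (0:ℝ), ENNReal.ofReal ((t ^ α * ‖C (T t x)‖) ^ p)) ^ (1/p)
        ≤ ENNReal.ofReal (M * ‖x‖) := by
  have hp0 : (0:ℝ) < p := lt_of_lt_of_le one_pos hp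
  have hτ2 : (0:ℝ) < τ/2 := by positivity
  -- the sequence of constants
  set E : ℕ → ℝ := fun k => Nat.casesOn k (Mτ^p)
    (fun j => (max (((j:ℝ)+2)^α) 1 * (Mτ * c * Real.exp (-(ε * ((j:ℝ)*(τ/2))))))^p) with hE
  have hE0 : ∀ k, 0 ≤ E k := by
    intro k
    cases k with
    | zero => exact Real.rpow_nonneg hMτ p
    | succ j =>
      apply Real.rpow_nonneg
      have h1 : (0:ℝ) ≤ max (((j:ℝ)+2)^α) 1 := le_trans zero_le_one (le_max_right _ _)
      positivity
  -- summability of E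
  set m : ℕ := ⌈α⌉₊ with hm
  set n : ℕ := ⌈p⌉₊ with hn
  set ρ : ℝ := Real.exp (-(ε * (τ/2) * p)) with hρ
  have hρ0 : 0 < ρ := Real.exp_pos _
  have hρ1 : ρ < 1 := Real.exp_lt_one_iff.mpr (neg_lt_zero.mpr (by positivity))
  have hG : Summable (fun j : ℕ => ((j:ℝ)+2)^(m*n) * ρ^j) := by
    have base : Summable (fun j : ℕ => (j:ℝ)^(m*n) * ρ^j) :=
      summable_pow_mul_geometric_of_norm_lt_one (m*n)
        (by rwa [Real.norm_eq_abs, abs_of_pos hρ0])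
    have h2 : Summable (fun j : ℕ => ((j+2:ℕ):ℝ)^(m*n) * ρ^(j+2)) :=
      (summable_nat_add_iff 2).2 base
    refine (h2.mul_left (ρ⁻¹^2)).congr fun j => ?_
    push_cast
    field_simp
    ring
  have hEle : ∀ j : ℕ, E (j+1) ≤ (Mτ*c)^p * (((j:ℝ)+2)^(m*n) * ρ^j) := by
    intro j
    have hj2 : (1:ℝ) ≤ (j:ℝ)+2 := by linarith [Nat.cast_nonneg (α := ℝ) j]
    have hRm : max (((j:ℝ)+2)^α) 1 ≤ ((j:ℝ)+2)^m := by
      apply max_le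
      · calc ((j:ℝ)+2)^α ≤ ((j:ℝ)+2)^(m:ℝ) :=
              Real.rpow_le_rpow_of_exponent_le hj2 (Nat.le_ceil α)
          _ = ((j:ℝ)+2)^m := Real.rpow_natCast _ m
      · exact one_le_pow₀ hj2
    set B : ℝ := Mτ * c * Real.exp (-(ε * ((j:ℝ)*(τ/2)))) with hB
    have hB0 : 0 ≤ B := by positivity
    have hRB : max (((j:ℝ)+2)^α) 1 * B ≤ ((j:ℝ)+2)^m * B :=
      mul_le_mul_of_nonneg_right hRm hB0
    have h1 : E (j+1) ≤ (((j:ℝ)+2)^m * B)^p := by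
      refine Real.rpow_le_rpow ?_ hRB hp0.le
      have h0 : (0:ℝ) ≤ max (((j:ℝ)+2)^α) 1 := le_trans zero_le_one (le_max_right _ _)
      positivity
    have h2 : (((j:ℝ)+2)^m * B)^p = (((j:ℝ)+2)^m)^p * B^p :=
      Real.mul_rpow (by positivity) hB0
    have h3 : (((j:ℝ)+2)^m)^p ≤ ((j:ℝ)+2)^(m*n) := by
      calc (((j:ℝ)+2)^m)^p ≤ (((j:ℝ)+2)^m)^(n:ℝ) :=
            Real.rpow_le_rpow_of_exponent_le (one_le_pow₀ hj2) (Nat.le_ceil p)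
        _ = (((j:ℝ)+2)^m)^n := Real.rpow_natCast _ n
        _ = ((j:ℝ)+2)^(m*n) := (pow_mul _ m n).symm
    have h4 : B^p = (Mτ*c)^p * ρ^j := by
      rw [hB, hρ, Real.mul_rpow (by positivity) (Real.exp_pos _).le]
      congr 1
      rw [← Real.exp_nat_mul, ← Real.exp_mul]
      congr 1
      ring
    calc E (j+1) ≤ (((j:ℝ)+2)^m * B)^p := h1
      _ = (((j:ℝ)+2)^m)^p * B^p := h2
      _ ≤ ((j:ℝ)+2)^(m*n) * B^p := by
          have h0 : (0:ℝ) ≤ B^p := Real.rpow_nonneg hB0 p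
          exact mul_le_mul_of_nonneg_right h3 h0
      _ = (Mτ*c)^p * (((j:ℝ)+2)^(m*n) * ρ^j) := by rw [h4]; ring
  have hEsum : Summable E := by
    rw [← summable_nat_add_iff 1]
    exact Summable.of_nonneg_of_le (fun j => hE0 (j+1)) hEle (hG.mul_left _)
  set S : ℝ≥0∞ := ∑' k, ENNReal.ofReal (E k) with hS
  have hSne : S ≠ ⊤ := by
    rw [hS, ← ENNReal.ofReal_tsum_of_nonneg hE0 hEsum]
    exact ENNReal.ofReal_ne_top
  refine ⟨S.toReal ^ (1/p), Real.rpow_nonneg ENNReal.toReal_nonneg _, fun x => ?_⟩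
  -- the finite-time bound without the 1/p power
  have hfin' : ∀ y : X,
      (∫⁻ t in Ioo (0:ℝ) τ, ENNReal.ofReal ((t ^ α * ‖C (T t y)‖) ^ p))
        ≤ (ENNReal.ofReal (Mτ * ‖y‖)) ^ p := by
    intro y
    have h := hfin y
    calc (∫⁻ t in Ioo (0:ℝ) τ, ENNReal.ofReal ((t ^ α * ‖C (T t y)‖) ^ p))
        = ((∫⁻ t in Ioo (0:ℝ) τ, ENNReal.ofReal ((t ^ α * ‖C (T t y)‖) ^ p)) ^ (1/p)) ^ p := by
          rw [← ENNReal.rpow_mul, one_div, inv_mul_cancel₀ (ne_of_gt hp0), ENNReal.rpow_one]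
      _ ≤ (ENNReal.ofReal (Mτ * ‖y‖)) ^ p := ENNReal.rpow_le_rpow h hp0.le
  set F : ℝ → ℝ≥0∞ := fun t => ENNReal.ofReal ((t ^ α * ‖C (T t x)‖) ^ p) with hF
  -- cover of Ioi 0
  have hcover : Ioi (0:ℝ) ⊆ ⋃ k : ℕ, Ioc ((k:ℝ)*(τ/2)) (((k:ℝ)+1)*(τ/2)) := by
    intro t ht
    have ht0 : (0:ℝ) < t := ht
    set N : ℕ := ⌈t/(τ/2)⌉₊ with hN
    have hN1 : 1 ≤ N := Nat.one_le_ceil_iff.mpr (by positivity)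
    refine mem_iUnion.2 ⟨N-1, ?_⟩
    have hc1 : ((N-1:ℕ):ℝ) = (N:ℝ) - 1 := by
      rw [Nat.cast_sub hN1, Nat.cast_one]
    constructor
    · have hlt : ((N-1:ℕ):ℝ) < t/(τ/2) := Nat.lt_ceil.mp (by omega)
      calc ((N-1:ℕ):ℝ)*(τ/2) < (t/(τ/2))*(τ/2) :=
            mul_lt_mul_of_pos_right hlt hτ2
        _ = t := div_mul_cancel₀ t (ne_of_gt hτ2)
    · have hle : t/(τ/2) ≤ (N:ℝ) := Nat.le_ceil _
      have h2 : t ≤ (N:ℝ)*(τ/2) := by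
        rw [div_le_iff₀ hτ2] at hle; linarith
      rw [hc1]; linarith
  -- per-interval bound
  have hterm : ∀ k : ℕ,
      (∫⁻ t in Ioc ((k:ℝ)*(τ/2)) (((k:ℝ)+1)*(τ/2)), F t)
        ≤ ENNReal.ofReal (E k) * ENNReal.ofReal (‖x‖^p) := by
    intro k
    cases k with
    | zero =>
      have hsub : Ioc (0:ℝ) (τ/2) ⊆ Ioo 0 τ := fun t ht =>
        ⟨ht.1, lt_of_le_of_lt ht.2 (by linarith)⟩
      have e0 : ((0:ℕ):ℝ)*(τ/2) = (0:ℝ) := by norm_num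
      have e1 : (((0:ℕ):ℝ)+1)*(τ/2) = τ/2 := by norm_num
      rw [show (((0:ℕ):ℝ))*(τ/2) = (0:ℝ) by norm_num,
          show ((((0:ℕ):ℝ))+1)*(τ/2) = τ/2 by norm_num]
      calc (∫⁻ t in Ioc (0:ℝ) (τ/2), F t)
          ≤ ∫⁻ t in Ioo (0:ℝ) τ, F t := lintegral_mono_set hsub
        _ ≤ (ENNReal.ofReal (Mτ * ‖x‖)) ^ p := hfin' x
        _ = ENNReal.ofReal ((Mτ * ‖x‖)^p) :=
            ENNReal.ofReal_rpow_of_nonneg (by positivity) hp0.le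
        _ = ENNReal.ofReal (Mτ^p * ‖x‖^p) := by
            rw [Real.mul_rpow hMτ (norm_nonneg x)]
        _ = ENNReal.ofReal (E 0) * ENNReal.ofReal (‖x‖^p) := by
            have hE0eq : E 0 = Mτ^p := rfl
            rw [hE0eq, ← ENNReal.ofReal_mul (Real.rpow_nonneg hMτ p)]
    | succ j =>
      set b : ℝ := (j:ℝ)*(τ/2) with hb
      have hb0 : (0:ℝ) ≤ b := by positivity
      set y : X := T b x with hy
      have hyb : ‖y‖ ≤ c * Real.exp (-ε*b) * ‖x‖ := hstab b hb0 x
      set R : ℝ := max (((j:ℝ)+2)^α) 1 with hR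
      have hR1 : (1:ℝ) ≤ R := le_max_right _ _
      have hR0 : (0:ℝ) ≤ R := zero_le_one.trans hR1
      rw [show (((j+1:ℕ)):ℝ)*(τ/2) = τ/2 + b by push_cast [hb]; ring,
          show ((((j+1:ℕ)):ℝ)+1)*(τ/2) = τ + b by push_cast [hb]; ring,
          lintegral_Ioc_shift]
      have hmeas : (volume : Measure ℝ).restrict (Ioc (τ/2) τ)
          = (volume : Measure ℝ).restrict (Ioo (τ/2) τ) :=
        (Measure.restrict_congr_set Ioo_ae_eq_Ioc).symm
      rw [hmeas]
      -- pointwise bound on Ioo (τ/2) τ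
      have hpt : ∀ s ∈ Ioo (τ/2) τ,
          F (s + b) ≤ ENNReal.ofReal (R^p) *
            ENNReal.ofReal ((s ^ α * ‖C (T s y)‖) ^ p) := by
        intro s hs
        have hs0 : (0:ℝ) < s := lt_trans hτ2 hs.1
        have hTs : T (s + b) x = T s y := by
          rw [hsg s b hs0.le hb0]; rfl
        have hpow : (s+b)^α ≤ R * s^α := by
          rcases le_or_gt 0 α with hα0 | hα0
          · have hsb : s + b ≤ ((j:ℝ)+2) * s := by
              have h1 : (j:ℝ)*(τ/2) ≤ (j:ℝ)*s :=
                mul_le_mul_of_nonneg_left (le_of_lt hs.1) (Nat.cast_nonneg j)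
              have h2 : s < τ := hs.2
              rw [hb]
              nlinarith [Nat.cast_nonneg (α := ℝ) j]
            calc (s+b)^α ≤ (((j:ℝ)+2) * s)^α :=
                  Real.rpow_le_rpow (by positivity) hsb hα0
              _ = ((j:ℝ)+2)^α * s^α := Real.mul_rpow (by positivity) hs0.le
              _ ≤ R * s^α := mul_le_mul_of_nonneg_right (le_max_left _ _)
                  (Real.rpow_nonneg hs0.le α)
          · calc (s+b)^α ≤ s^α :=
                  Real.rpow_le_rpow_of_nonpos hs0 (by linarith) hα0.le
              _ = 1 * s^α := (one_mul _).symm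
              _ ≤ R * s^α := mul_le_mul_of_nonneg_right hR1 (Real.rpow_nonneg hs0.le α)
        have hu : (s+b)^α * ‖C (T (s+b) x)‖ ≤ R * (s^α * ‖C (T s y)‖) := by
          rw [hTs]
          calc (s+b)^α * ‖C (T s y)‖ ≤ (R * s^α) * ‖C (T s y)‖ :=
                mul_le_mul_of_nonneg_right hpow (norm_nonneg _)
            _ = R * (s^α * ‖C (T s y)‖) := by ring
        have hu' : ((s+b)^α * ‖C (T (s+b) x)‖)^p ≤ (R * (s^α * ‖C (T s y)‖))^p := by
          apply Real.rpow_le_rpow _ hu hp0.le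
          have h0 : (0:ℝ) ≤ (s+b)^α := Real.rpow_nonneg (by positivity) α
          positivity
        calc F (s + b) ≤ ENNReal.ofReal ((R * (s^α * ‖C (T s y)‖))^p) :=
              ENNReal.ofReal_le_ofReal hu'
          _ = ENNReal.ofReal (R^p * (s^α * ‖C (T s y)‖)^p) := by
              rw [Real.mul_rpow hR0 (by positivity)]
          _ = ENNReal.ofReal (R^p) * ENNReal.ofReal ((s^α * ‖C (T s y)‖)^p) :=
              ENNReal.ofReal_mul (Real.rpow_nonneg hR0 p)
      have hae : ∀ᵐ s ∂((volume : Measure ℝ).restrict (Ioo (τ/2) τ)),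
          F (s + b) ≤ ENNReal.ofReal (R^p) *
            ENNReal.ofReal ((s ^ α * ‖C (T s y)‖) ^ p) := by
        filter_upwards [ae_restrict_mem measurableSet_Ioo] with s hs using hpt s hs
      calc (∫⁻ s in Ioo (τ/2) τ, F (s + b))
          ≤ ∫⁻ s in Ioo (τ/2) τ, ENNReal.ofReal (R^p) *
              ENNReal.ofReal ((s ^ α * ‖C (T s y)‖) ^ p) := lintegral_mono_ae hae
        _ = ENNReal.ofReal (R^p) *
              ∫⁻ s in Ioo (τ/2) τ, ENNReal.ofReal ((s ^ α * ‖C (T s y)‖) ^ p) :=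
            lintegral_const_mul' _ _ ENNReal.ofReal_ne_top
        _ ≤ ENNReal.ofReal (R^p) *
              ∫⁻ s in Ioo (0:ℝ) τ, ENNReal.ofReal ((s ^ α * ‖C (T s y)‖) ^ p) := by
            gcongr
        _ ≤ ENNReal.ofReal (R^p) * (ENNReal.ofReal (Mτ * ‖y‖)) ^ p := by
            gcongr
            exact hfin' y
        _ = ENNReal.ofReal (R^p * (Mτ * ‖y‖)^p) := by
            rw [ENNReal.ofReal_rpow_of_nonneg (by positivity) hp0.le,
                ← ENNReal.ofReal_mul (Real.rpow_nonneg hR0 p)]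
        _ ≤ ENNReal.ofReal (R^p * (Mτ * (c * Real.exp (-ε*b) * ‖x‖))^p) := by
            apply ENNReal.ofReal_le_ofReal
            apply mul_le_mul_of_nonneg_left _ (Real.rpow_nonneg hR0 p)
            apply Real.rpow_le_rpow (by positivity) _ hp0.le
            exact mul_le_mul_of_nonneg_left hyb hMτ
        _ = ENNReal.ofReal (E (j+1)) * ENNReal.ofReal (‖x‖^p) := by
            rw [← ENNReal.ofReal_mul (hE0 (j+1))]
            congr 1
            have hEj : E (j+1) = (R * (Mτ * c * Real.exp (-(ε * ((j:ℝ)*(τ/2))))))^p := rfl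
            rw [hEj]
            have harg : -(ε * ((j:ℝ)*(τ/2))) = -ε*b := by rw [hb]; ring
            rw [harg]
            have hfact : Mτ * (c * Real.exp (-ε*b) * ‖x‖)
                = (Mτ * c * Real.exp (-ε*b)) * ‖x‖ := by ring
            rw [hfact, Real.mul_rpow (by positivity) (norm_nonneg x),
                Real.mul_rpow hR0 (by positivity)]
            ring
  -- assemble
  have hmain : (∫⁻ t in Ioi (0:ℝ), F t) ≤ S * ENNReal.ofReal (‖x‖^p) := by
    calc (∫⁻ t in Ioi (0:ℝ), F t)
        ≤ ∫⁻ t in ⋃ k : ℕ, Ioc ((k:ℝ)*(τ/2)) (((k:ℝ)+1)*(τ/2)), F t :=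
          lintegral_mono_set hcover
      _ ≤ ∑' k : ℕ, ∫⁻ t in Ioc ((k:ℝ)*(τ/2)) (((k:ℝ)+1)*(τ/2)), F t :=
          lintegral_iUnion_le _ _
      _ ≤ ∑' k : ℕ, ENNReal.ofReal (E k) * ENNReal.ofReal (‖x‖^p) :=
          ENNReal.tsum_le_tsum hterm
      _ = S * ENNReal.ofReal (‖x‖^p) := ENNReal.tsum_mul_right
  calc (∫⁻ t in Ioi (0:ℝ), F t) ^ (1/p)
      ≤ (S * ENNReal.ofReal (‖x‖^p)) ^ (1/p) :=
        ENNReal.rpow_le_rpow hmain (by positivity)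
    _ = S ^ (1/p) * (ENNReal.ofReal (‖x‖^p)) ^ (1/p) :=
        ENNReal.mul_rpow_of_nonneg _ _ (by positivity)
    _ = ENNReal.ofReal (S.toReal ^ (1/p)) * ENNReal.ofReal ‖x‖ := by
        congr 1
        · conv_lhs => rw [← ENNReal.ofReal_toReal hSne]
          rw [ENNReal.ofReal_rpow_of_nonneg ENNReal.toReal_nonneg (by positivity)]
        · rw [ENNReal.ofReal_rpow_of_nonneg (by positivity) (by positivity),
              ← Real.rpow_mul (norm_nonneg x), mul_one_div_cancel (ne_of_gt hp0),
              Real.rpow_one]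
    _ = ENNReal.ofReal (S.toReal ^ (1/p) * ‖x‖) :=
        (ENNReal.ofReal_mul (Real.rpow_nonneg ENNReal.toReal_nonneg _)).symm
end
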